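/- Suppose each threshold for Y is no greater than the corresponding threshold for X: Δ_{γ,j} ≤ 0 for all j = 1,…,J−1. Define T_X = ⋃_{j=1}^{J−1} T_{Xj}, where T_{Xj} = (F_X(j), F_Y(j)] if F_X(j) < F_Y(j) and T_{Xj} = ∅ otherwise. Then Q_X*(τ) > Q_Y*(τ) for every τ ∈ T_X. -/

import Mathlib

open MeasureTheory Set

/-- CDF of a Borel (probability) measure on ℝ: `F(x) = μ((-∞, x])`. -/
noncomputable def cdfOf (μ : MeasureTheory.Measure ℝ) (x : ℝ) : ℝ := (μ (Set.Iic x)).toReal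

/-- Quantile function with values in the extended reals:
`Q(τ) = inf {x ∈ ℝ : F(x) ≥ τ}`, with the convention `inf ∅ = +∞`. -/
noncomputable def quantileE (μ : MeasureTheory.Measure ℝ) (τ : ℝ) : EReal :=
  sInf {y : EReal | ∃ x : ℝ, y = (x : EReal) ∧ τ ≤ cdfOf μ x}

lemma cdfOf_eq_cdf (μ : MeasureTheory.Measure ℝ) [IsProbabilityMeasure μ] :
    cdfOf μ = ProbabilityTheory.cdf μ := by
  funext x
  rw [cdfOf, ProbabilityTheory.cdf_eq_real, measureReal_def]

/-- Theorem 2 of the paper: if each threshold for `Y` is no greater than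
the corresponding threshold for `X` (`Δ_{γ,j} ≤ 0`), then for every
`τ ∈ T_X = ⋃_{j : F_X(j) < F_Y(j)} (F_X(j), F_Y(j)]`, the latent `τ`-quantile of `X*`
is strictly greater than that of `Y*`.
(Here `Set.Ioc (FX j) (FY j)` is empty when `F_X(j) ≥ F_Y(j)`, matching `T_{Xj} = ∅`.) -/
theorem stmt2
    (μX μY : MeasureTheory.Measure ℝ)
    [IsProbabilityMeasure μX] [IsProbabilityMeasure μY]
    (J : ℕ) (hJ : 2 ≤ J)
    (γ : ℕ → ℝ) (hγ : ∀ j k, 1 ≤ j → j < k → k ≤ J - 1 → γ j < γ k)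
    (Δ : ℕ → ℝ) (hΔ : ∀ j, 1 ≤ j → j ≤ J - 1 → Δ j ≤ 0)
    (FX FY : ℕ → ℝ)
    (hFX : ∀ j, 1 ≤ j → j ≤ J - 1 → FX j = cdfOf μX (γ j))
    (hFY : ∀ j, 1 ≤ j → j ≤ J - 1 → FY j = cdfOf μY (γ j + Δ j))
    (τ : ℝ)
    (hτ : τ ∈ ⋃ j ∈ {j : ℕ | 1 ≤ j ∧ j ≤ J - 1 ∧ FX j < FY j}, Set.Ioc (FX j) (FY j)) :
    quantileE μY τ < quantileE μX τ := by
  simp only [mem_iUnion, mem_setOf_eq, mem_Ioc] at hτ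
  obtain ⟨j, ⟨hj1, hjJ, _⟩, hτX, hτY⟩ := hτ
  -- Upper bound for the Y quantile
  have hY : quantileE μY τ ≤ ((γ j + Δ j : ℝ) : EReal) := by
    apply sInf_le
    exact ⟨γ j + Δ j, rfl, by rw [← hFY j hj1 hjJ]; exact hτY⟩
  -- find ε-shifted point with cdf still below τ, using right continuity
  have hcX : cdfOf μX (γ j) < τ := by rw [← hFX j hj1 hjJ]; exact hτX
  rw [cdfOf_eq_cdf] at hcX
  have hrc : ContinuousWithinAt (ProbabilityTheory.cdf μX) (Ici (γ j)) (γ j) :=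
    (ProbabilityTheory.cdf μX).right_continuous (γ j)
  have hev : ∀ᶠ x in nhdsWithin (γ j) (Ici (γ j)), ProbabilityTheory.cdf μX x < τ :=
    hrc.eventually_lt continuousWithinAt_const hcX
  have hev' : ∀ᶠ x in nhdsWithin (γ j) (Ioi (γ j)), ProbabilityTheory.cdf μX x < τ :=
    hev.filter_mono (nhdsWithin_mono _ Ioi_subset_Ici_self)
  obtain ⟨x, hxlt, hx⟩ := (hev'.and self_mem_nhdsWithin).exists
  -- Lower bound for the X quantile: every point in the set is ≥ x
  have hX : ((x : ℝ) : EReal) ≤ quantileE μX τ := by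
    apply le_sInf
    rintro y ⟨z, rfl, hz⟩
    rw [cdfOf_eq_cdf] at hz
    have : x ≤ z := by
      by_contra h
      push_neg at h
      exact absurd (le_trans hz ((ProbabilityTheory.cdf μX).mono h.le)) (not_le.mpr hxlt)
    exact_mod_cast this
  refine lt_of_le_of_lt hY (lt_of_lt_of_le ?_ hX)
  have h1 : γ j + Δ j ≤ γ j := by linarith [hΔ j hj1 hjJ]
  have h2 : γ j + Δ j < x := lt_of_le_of_lt h1 hx
  exact_mod_cast h2
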